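/- If X ∈ ℝ^{(n_p+n)×(n_p+n)} is symmetric and satisfies the LMI [[ÃᵀXÃ−X, ÃᵀXB̃],[B̃ᵀXÃ, B̃ᵀXB̃]] − M_fᵀΠM_f ≺ 0 (negative definite), then X is positive definite. -/

import Mathlib

open Matrix Finset

noncomputable section

/-- All eigenvalues of the real matrix `A` lie in the open unit disk. -/
def SpecInUnitDisk {k : ℕ} (A : Matrix (Fin k) (Fin k) ℝ) : Prop :=
  ∀ z : ℂ, z ∈ spectrum ℂ (A.map Complex.ofReal) → ‖z‖ < 1

/-- A real symmetric matrix is negative definite. -/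
def NegDef {ι : Type} [Fintype ι] (M : Matrix ι ι ℝ) : Prop := (-M).PosDef

/-- The lifted matrix `Ã = [[A_p, B_p, 0],[0, 0, I_{n-1}],[0, 0, 0]]`. -/
def Atil (np n : ℕ) (Ap : Matrix (Fin np) (Fin np) ℝ) (Bp : Matrix (Fin np) (Fin 1) ℝ) :
    Matrix (Fin np ⊕ Fin n) (Fin np ⊕ Fin n) ℝ :=
  Matrix.fromBlocks Ap
    (Matrix.of fun i (j : Fin n) => if (j : ℕ) = 0 then Bp i 0 else 0) 0
    (Matrix.of fun (i j : Fin n) => if (j : ℕ) = (i : ℕ) + 1 then (1 : ℝ) else 0)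

/-- The lifted input matrix `B̃ = (0,…,0,1)ᵀ`. -/
def Btil (np n : ℕ) : Matrix (Fin np ⊕ Fin n) (Fin 1) ℝ :=
  Matrix.of fun i _ =>
    Sum.elim (fun _ => (0 : ℝ)) (fun j : Fin n => if (j : ℕ) = n - 1 then 1 else 0) i

/-- The row vector `C_n = [C_p, D_p, 0_{n-1}]`. -/
def Cnrow (np n : ℕ) (Cp : Matrix (Fin 1) (Fin np) ℝ) (Dp : ℝ) :
    Matrix (Fin 1) (Fin np ⊕ Fin n) ℝ :=
  Matrix.of fun _ j =>
    Sum.elim (fun a => Cp 0 a) (fun b : Fin n => if (b : ℕ) = 0 then Dp else 0) j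

/-- The row vector `C_{d,j}` whose only nonzero entry is a `1` in position
`n_p + n - j + 1` (1-based). -/
def Cdrow (np n : ℕ) (j : ℕ) : Matrix (Fin 1) (Fin np ⊕ Fin n) ℝ :=
  Matrix.of fun _ idx =>
    Sum.elim (fun _ => (0 : ℝ)) (fun r : Fin n => if (r : ℕ) = n - j then 1 else 0) idx

/-- The rows `C_i`, `i = -n_f, …, n_b`:
`C_i = C_n Ã^{n-i} + Σ_{j=1}^{-i} (C_n Ã^{n-i-j-1} B̃) C_{d,j}` for `i < 0`,
and `C_i = C_n Ã^{n-i}` for `i ≥ 0`. -/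
def Crow (np n : ℕ) (Ap : Matrix (Fin np) (Fin np) ℝ) (Bp : Matrix (Fin np) (Fin 1) ℝ)
    (Cp : Matrix (Fin 1) (Fin np) ℝ) (Dp : ℝ) (i : ℤ) :
    Matrix (Fin 1) (Fin np ⊕ Fin n) ℝ :=
  if i < 0 then
    Cnrow np n Cp Dp * (Atil np n Ap Bp) ^ (((n : ℤ) - i).toNat) +
      ∑ j ∈ Finset.Icc 1 (-i).toNat,
        ((Cnrow np n Cp Dp * (Atil np n Ap Bp) ^ (((n : ℤ) - i - (j : ℤ) - 1).toNat) *
            Btil np n) 0 0) • Cdrow np n j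
  else Cnrow np n Cp Dp * (Atil np n Ap Bp) ^ (((n : ℤ) - i).toNat)

/-- The scalars `D_i`: `D_i = C_n Ã^{n-i-1} B̃` for `i ≤ 0` and `D_i = 0` for
`i ≥ 1`. -/
def Dval (np n : ℕ) (Ap : Matrix (Fin np) (Fin np) ℝ) (Bp : Matrix (Fin np) (Fin 1) ℝ)
    (Cp : Matrix (Fin 1) (Fin np) ℝ) (Dp : ℝ) (i : ℤ) : ℝ :=
  if i ≤ 0 then
    (Cnrow np n Cp Dp * (Atil np n Ap Bp) ^ (((n : ℤ) - i - 1).toNat) * Btil np n) 0 0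
  else 0

/-- The coefficient column vector `m = (m_{-n_f},…,m_{-1},1,m_1,…,m_{n_b})ᵀ`. -/
def mvec (nf nb : ℕ) (mc : ℤ → ℝ) : Matrix (Fin (nf + nb + 1)) (Fin 1) ℝ :=
  Matrix.of fun k _ => mc ((k : ℤ) - (nf : ℤ))

/-- The matrix `Π = [[0, m],[mᵀ, 0]]`. -/
def PiMat (nf nb : ℕ) (mc : ℤ → ℝ) :
    Matrix (Fin (nf + nb + 1) ⊕ Fin 1) (Fin (nf + nb + 1) ⊕ Fin 1) ℝ :=
  Matrix.fromBlocks 0 (mvec nf nb mc) (mvec nf nb mc)ᵀ 0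

/-- The matrix `C` whose rows are `C_{-n_f},…,C_{n_b}`. -/
def Cmat (np n nf nb : ℕ) (Ap : Matrix (Fin np) (Fin np) ℝ)
    (Bp : Matrix (Fin np) (Fin 1) ℝ) (Cp : Matrix (Fin 1) (Fin np) ℝ) (Dp : ℝ) :
    Matrix (Fin (nf + nb + 1)) (Fin np ⊕ Fin n) ℝ :=
  Matrix.of fun k j => Crow np n Ap Bp Cp Dp ((k : ℤ) - (nf : ℤ)) 0 j

/-- The column vector `(D_{-n_f},…,D_{n_b})ᵀ`. -/
def Dcol (np n nf nb : ℕ) (Ap : Matrix (Fin np) (Fin np) ℝ)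
    (Bp : Matrix (Fin np) (Fin 1) ℝ) (Cp : Matrix (Fin 1) (Fin np) ℝ) (Dp : ℝ) :
    Matrix (Fin (nf + nb + 1)) (Fin 1) ℝ :=
  Matrix.of fun k _ => Dval np n Ap Bp Cp Dp ((k : ℤ) - (nf : ℤ))

/-- The matrix `M_f = [[C, D],[0, 1]]`. -/
def MfMat (np n nf nb : ℕ) (Ap : Matrix (Fin np) (Fin np) ℝ)
    (Bp : Matrix (Fin np) (Fin 1) ℝ) (Cp : Matrix (Fin 1) (Fin np) ℝ) (Dp : ℝ) :
    Matrix (Fin (nf + nb + 1) ⊕ Fin 1) ((Fin np ⊕ Fin n) ⊕ Fin 1) ℝ :=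
  Matrix.fromBlocks (Cmat np n nf nb Ap Bp Cp Dp) (Dcol np n nf nb Ap Bp Cp Dp) 0 1

/-- The KYP block matrix `[[ÃᵀXÃ−X, ÃᵀXB̃],[B̃ᵀXÃ, B̃ᵀXB̃]]`. -/
def KYPblock (np n : ℕ) (Ap : Matrix (Fin np) (Fin np) ℝ)
    (Bp : Matrix (Fin np) (Fin 1) ℝ) (X : Matrix (Fin np ⊕ Fin n) (Fin np ⊕ Fin n) ℝ) :
    Matrix ((Fin np ⊕ Fin n) ⊕ Fin 1) ((Fin np ⊕ Fin n) ⊕ Fin 1) ℝ :=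
  Matrix.fromBlocks
    ((Atil np n Ap Bp)ᵀ * X * Atil np n Ap Bp - X)
    ((Atil np n Ap Bp)ᵀ * X * Btil np n)
    ((Btil np n)ᵀ * X * Atil np n Ap Bp)
    ((Btil np n)ᵀ * X * Btil np n)


/-! ### Auxiliary lemmas -/

attribute [local instance] Matrix.linftyOpNormedRing Matrix.linftyOpNormedAlgebra

theorem aux_entry_le_norm {ι : Type} [Fintype ι] [DecidableEq ι] (M : Matrix ι ι ℂ) (i j : ι) :
    ‖M i j‖ ≤ ‖M‖ := by
  have h1 : ‖M i j‖₊ ≤ ∑ k, ‖M i k‖₊ :=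
    Finset.single_le_sum (f := fun k => ‖M i k‖₊) (fun k _ => zero_le) (Finset.mem_univ j)
  have h2 : (∑ k, ‖M i k‖₊) ≤ ‖M‖₊ := by
    rw [Matrix.linfty_opNNNorm_def]
    exact Finset.le_sup (f := fun i => ∑ k, ‖M i k‖₊) (Finset.mem_univ i)
  exact_mod_cast h1.trans h2

theorem aux_pow_norm_tendsto {ι : Type} [Fintype ι] [DecidableEq ι] [Nonempty ι]
    (M : Matrix ι ι ℂ) (h : ∀ z ∈ spectrum ℂ M, ‖z‖ < 1) :
    Filter.Tendsto (fun N : ℕ => ‖M ^ N‖) Filter.atTop (nhds 0) := by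
  have hρ : spectralRadius ℂ M < 1 := by
    have := spectrum.spectralRadius_lt_of_forall_lt M (r := 1)
      (fun z hz => by simpa [← NNReal.coe_lt_coe, coe_nnnorm] using h z hz)
    simpa using this
  obtain ⟨c, hc1, hc2⟩ := ENNReal.lt_iff_exists_nnreal_btwn.mp hρ
  have hgel := spectrum.pow_norm_pow_one_div_tendsto_nhds_spectralRadius M
  have hev : ∀ᶠ N : ℕ in Filter.atTop,
      ENNReal.ofReal (‖M ^ N‖ ^ (1 / (N:ℝ))) < (c : ENNReal) :=
    hgel.eventually_lt_const hc1
  have hc0 : (0:ℝ) ≤ c := c.coe_nonneg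
  have hcR : (c:ℝ) < 1 := by exact_mod_cast hc2
  have hev2 : ∀ᶠ N : ℕ in Filter.atTop, ‖M ^ N‖ ≤ (c:ℝ) ^ N := by
    filter_upwards [hev, Filter.eventually_ge_atTop 1] with N hN hN1
    have hx : ‖M ^ N‖ ^ (1 / (N:ℝ)) < (c:ℝ) := by
      have := (ENNReal.ofReal_lt_iff_lt_toReal (by positivity) ENNReal.coe_ne_top).mp hN
      simpa using this
    calc ‖M ^ N‖ = (‖M ^ N‖ ^ ((N:ℝ)⁻¹)) ^ N := by
          rw [Real.rpow_inv_natCast_pow (norm_nonneg _) (by omega)]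
      _ ≤ (c:ℝ) ^ N := by
          apply pow_le_pow_left₀ (Real.rpow_nonneg (norm_nonneg _) _)
          simpa [one_div] using hx.le
  exact squeeze_zero' (Filter.Eventually.of_forall fun _ => norm_nonneg _) hev2
    (tendsto_pow_atTop_nhds_zero_of_lt_one hc0 hcR)

theorem atil_spec (np n : ℕ) (Ap : Matrix (Fin np) (Fin np) ℝ) (hAp : SpecInUnitDisk Ap)
    (Bp : Matrix (Fin np) (Fin 1) ℝ) :
    ∀ z : ℂ, z ∈ spectrum ℂ ((Atil np n Ap Bp).map Complex.ofReal) → ‖z‖ < 1 := by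
  intro z hz
  rw [spectrum.mem_iff, Matrix.isUnit_iff_isUnit_det, isUnit_iff_ne_zero, not_not] at hz
  set Apc := Ap.map Complex.ofReal with hApc
  have hmap : (Atil np n Ap Bp).map Complex.ofReal =
      Matrix.fromBlocks Apc
        ((Matrix.of fun i (j : Fin n) => if (j : ℕ) = 0 then Bp i 0 else 0).map Complex.ofReal) 0
        ((Matrix.of fun (i j : Fin n) => if (j : ℕ) = (i : ℕ) + 1 then (1 : ℝ) else 0).map
          Complex.ofReal) := by
    rw [Atil, Matrix.fromBlocks_map]
    ext (i|i) (j|j) <;> simp [Matrix.fromBlocks, hApc]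
  have halg : (algebraMap ℂ (Matrix (Fin np ⊕ Fin n) (Fin np ⊕ Fin n) ℂ)) z =
      Matrix.fromBlocks (Matrix.diagonal fun _ => z) 0 0 (Matrix.diagonal fun _ => z) := by
    rw [Matrix.fromBlocks_diagonal]
    ext i j
    rcases i with i|i <;> rcases j with j|j <;>
      simp [Matrix.algebraMap_matrix_apply, Matrix.diagonal]
  rw [hmap, halg] at hz
  have hsub : ∀ (a a' : Matrix (Fin np) (Fin np) ℂ) (b b' : Matrix (Fin np) (Fin n) ℂ)
      (c c' : Matrix (Fin n) (Fin np) ℂ) (d d' : Matrix (Fin n) (Fin n) ℂ),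
      Matrix.fromBlocks a b c d - Matrix.fromBlocks a' b' c' d' =
        Matrix.fromBlocks (a - a') (b - b') (c - c') (d - d') := by
    intro a a' b b' c c' d d'
    ext (i|i) (j|j) <;> simp [Matrix.fromBlocks]
  rw [hsub] at hz
  simp only [sub_zero, zero_sub] at hz
  rw [Matrix.det_fromBlocks_zero₂₁] at hz
  rcases mul_eq_zero.mp hz with h1 | h2
  · apply hAp
    rw [spectrum.mem_iff, Matrix.isUnit_iff_isUnit_det, isUnit_iff_ne_zero, not_not]
    convert h1 using 2
    ext i j; simp [hApc, Matrix.algebraMap_matrix_apply, Matrix.diagonal]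
  · have hup : ((Matrix.diagonal fun _ : Fin n => z) -
        (Matrix.of fun (i j : Fin n) => if (j : ℕ) = (i : ℕ) + 1 then (1 : ℝ) else 0).map
          Complex.ofReal).BlockTriangular id := by
      intro i j hij
      have hlt : (j:ℕ) < (i:ℕ) := hij
      simp only [Matrix.sub_apply, Matrix.diagonal_apply, Matrix.map_apply, Matrix.of_apply]
      rw [if_neg (by simp [Fin.ext_iff]; omega), if_neg (by omega)]
      simp
    have hdet := Matrix.det_of_upperTriangular hup
    rw [hdet] at h2
    have hzn : z ^ n = 0 := by
      rw [← h2]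
      rw [Finset.prod_congr rfl]
      · rw [Finset.prod_const, Finset.card_univ, Fintype.card_fin]
      intro i _
      simp only [Matrix.sub_apply, Matrix.diagonal_apply_eq, Matrix.map_apply, Matrix.of_apply]
      rw [if_neg (by omega)]
      simp
    have hz0 : z = 0 := by
      rcases Nat.eq_zero_or_pos n with h|h
      · rw [h] at hzn; simp at hzn
      · exact pow_eq_zero_iff (by omega) |>.mp hzn
    simp [hz0]

/-- any symmetric solution `X` of the FIR Zames–Falb LMI is positive
definite (hard factorization). -/
theorem lmi_solution_posdef (np nf nb : ℕ) (n : ℕ) (hn : n = max nf nb) (hn1 : 1 ≤ n)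
    (Ap : Matrix (Fin np) (Fin np) ℝ) (hAp : SpecInUnitDisk Ap)
    (Bp : Matrix (Fin np) (Fin 1) ℝ) (Cp : Matrix (Fin 1) (Fin np) ℝ) (Dp : ℝ)
    (mc : ℤ → ℝ) (hm0 : mc 0 = 1)
    (X : Matrix (Fin np ⊕ Fin n) (Fin np ⊕ Fin n) ℝ) (hX : Xᵀ = X)
    (hLMI : NegDef (KYPblock np n Ap Bp X -
      (MfMat np n nf nb Ap Bp Cp Dp)ᵀ * PiMat nf nb mc * MfMat np n nf nb Ap Bp Cp Dp)) :
    X.PosDef := by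
  classical
  set A := Atil np n Ap Bp with hA
  -- positivity of the quadratic form of Q := X - AᵀXA
  have hQ : ∀ w : (Fin np ⊕ Fin n) → ℝ, w ≠ 0 →
      0 < w ⬝ᵥ ((X - Aᵀ * X * A) *ᵥ w) := by
    intro w hw
    set x : ((Fin np ⊕ Fin n) ⊕ Fin 1) → ℝ := Sum.elim w 0 with hx
    have hxne : x ≠ 0 := by
      intro h
      apply hw
      funext i
      exact congrFun h (Sum.inl i)
    have hpos := Matrix.PosDef.dotProduct_mulVec_pos hLMI hxne
    have hstar : star x = x := by funext i; simp
    rw [hstar] at hpos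
    rw [Matrix.neg_mulVec, dotProduct_neg, Matrix.sub_mulVec, dotProduct_sub] at hpos
    -- compute the two pieces
    have hKYP : x ⬝ᵥ ((KYPblock np n Ap Bp X) *ᵥ x) =
        w ⬝ᵥ ((Aᵀ * X * A - X) *ᵥ w) := by
      rw [KYPblock, hx, Matrix.fromBlocks_mulVec]
      simp [sumElim_dotProduct_sumElim, hA]
    have hPi : x ⬝ᵥ (((MfMat np n nf nb Ap Bp Cp Dp)ᵀ * PiMat nf nb mc *
        MfMat np n nf nb Ap Bp Cp Dp) *ᵥ x) = 0 := by
      set Mf := MfMat np n nf nb Ap Bp Cp Dp with hMf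
      have h1 : (Mfᵀ * PiMat nf nb mc * Mf) *ᵥ x =
          Mfᵀ *ᵥ ((PiMat nf nb mc) *ᵥ (Mf *ᵥ x)) := by
        rw [Matrix.mulVec_mulVec, Matrix.mulVec_mulVec]
      rw [h1, Matrix.dotProduct_mulVec, Matrix.vecMul_transpose]
      have h3 : Mf *ᵥ x = Sum.elim ((Cmat np n nf nb Ap Bp Cp Dp) *ᵥ w) 0 := by
        rw [hMf, MfMat, hx, Matrix.fromBlocks_mulVec]
        simp
      rw [h3, PiMat, Matrix.fromBlocks_mulVec]
      simp [sumElim_dotProduct_sumElim]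
    rw [hKYP, hPi] at hpos
    have : 0 < - (w ⬝ᵥ ((Aᵀ * X * A - X) *ᵥ w)) := by linarith [hpos]
    have hneg : - (w ⬝ᵥ ((Aᵀ * X * A - X) *ᵥ w)) = w ⬝ᵥ ((X - Aᵀ * X * A) *ᵥ w) := by
      rw [Matrix.sub_mulVec, Matrix.sub_mulVec, dotProduct_sub, dotProduct_sub]
      ring
    linarith [hneg ▸ this]
  -- entries of A ^ N tend to 0
  have hNE : Nonempty (Fin np ⊕ Fin n) := ⟨Sum.inr ⟨0, hn1⟩⟩
  have hnorm := aux_pow_norm_tendsto (M := A.map Complex.ofReal)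
    (atil_spec np n Ap hAp Bp)
  have hentry : ∀ i j, Filter.Tendsto (fun N : ℕ => (A ^ N) i j) Filter.atTop (nhds 0) := by
    intro i j
    apply squeeze_zero_norm _ hnorm
    intro N
    have hmp : (A.map Complex.ofReal) ^ N = (A ^ N).map Complex.ofReal := by
      have := map_pow (Complex.ofRealHom.mapMatrix :
        Matrix (Fin np ⊕ Fin n) (Fin np ⊕ Fin n) ℝ →+*
          Matrix (Fin np ⊕ Fin n) (Fin np ⊕ Fin n) ℂ) A N
      simp only [RingHom.mapMatrix_apply] at this; exact this.symm
    show ‖(A ^ N) i j‖ ≤ _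
    calc ‖(A ^ N) i j‖ = ‖(((A ^ N).map Complex.ofReal) : Matrix _ _ ℂ) i j‖ := by
          simp [Real.norm_eq_abs]
      _ ≤ ‖(A.map Complex.ofReal) ^ N‖ := by rw [hmp]; exact aux_entry_le_norm _ i j
    
  -- Lyapunov argument
  have hherm : X.IsHermitian := by
    have : Xᴴ = Xᵀ := by ext i j; simp [Matrix.conjTranspose_apply]
    rw [Matrix.IsHermitian, this, hX]
  refine Matrix.PosDef.of_dotProduct_mulVec_pos hherm (fun v hv => ?_)
  have hstarv : star v = v := by funext i; simp
  rw [hstarv]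
  set vk : ℕ → (Fin np ⊕ Fin n) → ℝ := fun N => (A ^ N) *ᵥ v with hvk
  set s : ℕ → ℝ := fun N => vk N ⬝ᵥ (X *ᵥ vk N) with hs
  set q : ℕ → ℝ := fun N => vk N ⬝ᵥ ((X - Aᵀ * X * A) *ᵥ vk N) with hq
  have hkey : ∀ u : (Fin np ⊕ Fin n) → ℝ,
      (A *ᵥ u) ⬝ᵥ (X *ᵥ (A *ᵥ u)) = u ⬝ᵥ ((Aᵀ * X * A) *ᵥ u) := by
    intro u
    have h1 : (Aᵀ * X * A) *ᵥ u = Aᵀ *ᵥ (X *ᵥ (A *ᵥ u)) := by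
      rw [Matrix.mulVec_mulVec, Matrix.mulVec_mulVec]
    rw [h1, Matrix.mulVec_transpose, dotProduct_comm u, ← Matrix.dotProduct_mulVec,
      dotProduct_comm]
  have hstep : ∀ N, s (N + 1) = s N - q N := by
    intro N
    have h1 : vk (N + 1) = A *ᵥ vk N := by
      simp only [hvk, pow_succ']
      rw [Matrix.mulVec_mulVec]
    simp only [hs, hq, h1]
    rw [hkey (vk N), Matrix.sub_mulVec, dotProduct_sub]
    ring
  have hq0 : ∀ N, 0 ≤ q N := by
    intro N
    by_cases h : vk N = 0
    · rw [hq]; simp [h]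
    · exact (hQ (vk N) h).le
  have hdec : ∀ N, 1 ≤ N → s N ≤ s 0 - q 0 := by
    intro N hN
    induction N with
    | zero => omega
    | succ M ih =>
      rcases Nat.eq_zero_or_pos M with h|h
      · subst h; rw [hstep 0]
      · calc s (M + 1) = s M - q M := hstep M
          _ ≤ s M := by linarith [hq0 M]
          _ ≤ s 0 - q 0 := ih h
  have hvlim : ∀ i, Filter.Tendsto (fun N => vk N i) Filter.atTop (nhds 0) := by
    intro i
    have hrep : (fun N => vk N i) = fun N => ∑ j, (A ^ N) i j * v j := by
      funext N; simp only [hvk]; simp [Matrix.mulVec, dotProduct]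
    rw [hrep]
    have := tendsto_finset_sum (Finset.univ (α := Fin np ⊕ Fin n))
      (fun j _ => (hentry i j).mul_const (v j))
    simpa using this
  have hslim : Filter.Tendsto s Filter.atTop (nhds 0) := by
    have hsexp : s = fun N => ∑ i, vk N i * ∑ j, X i j * vk N j := by
      funext N; simp only [hs]; simp [Matrix.mulVec, dotProduct]
    rw [hsexp]
    have := tendsto_finset_sum (Finset.univ (α := Fin np ⊕ Fin n)) fun i _ =>
      (hvlim i).mul (tendsto_finset_sum Finset.univ fun j _ =>
        (tendsto_const_nhds (x := X i j)).mul (hvlim j))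
    simpa using this
  have hle : (0:ℝ) ≤ s 0 - q 0 :=
    le_of_tendsto hslim (Filter.eventually_atTop.mpr ⟨1, hdec⟩)
  have hq0pos : 0 < q 0 := by
    have hvk0 : vk 0 = v := by simp only [hvk]; simp [Matrix.one_mulVec]
    simp only [hq, hvk0]
    exact hQ v hv
  have hs0 : s 0 = v ⬝ᵥ (X *ᵥ v) := by simp only [hs, hvk]; simp [Matrix.one_mulVec]
  rw [← hs0]
  linarith
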